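/- arXiv:1410.1627 — 6 statements merged into one kernel-verified Lean document; each statement's English description precedes it below -/
import Mathlib

section
/- A binary linear code C of dimension k with value assignment m(·) is subcode-complete if and only if m(p) > 0 for all points p of PG(k−1, 2). Equivalently: a k-dimensional binary code C generated by a k×n matrix G whose columns are nonzero vectors of GF(2)^k satisfies that every subcode D of C equals the shortened subcode C_{supp(D)} if and only if every nonzero vector of GF(2)^k appears among the columns of G. -/
/-- The fundamental cone of a binary matrix `H` (entries in `GF(2)`),
    viewed via its support: `x ∈ K(H)` iff all coordinates are nonnegative and
    for every row `j` and every `ℓ` in the support of row `j`,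
    `x ℓ ≤ ∑_{i ∈ supp(row j), i ≠ ℓ} x i`. -/
def fundCone {ι κ : Type*} [Fintype ι] [Fintype κ] [DecidableEq κ]
    (H : Matrix ι κ (ZMod 2)) : Set (κ → ℝ) :=
  {x | (∀ i, 0 ≤ x i) ∧
    ∀ j, ∀ ℓ, H j ℓ = 1 →
      x ℓ ≤ ∑ i ∈ Finset.univ.filter (fun i => H j i = 1 ∧ i ≠ ℓ), x i}

/-- Max-fractional weight: (sum of coordinates)/(max coordinate). -/
noncomputable def wMaxfrac {κ : Type*} [Fintype κ] (x : κ → ℝ) : ℝ :=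
  (∑ i, x i) / (⨆ i, x i)

/-- AWGNC pseudoweight. -/
noncomputable def wAWGNC {κ : Type*} [Fintype κ] (x : κ → ℝ) : ℝ :=
  (∑ i, x i) ^ 2 / (∑ i, (x i) ^ 2)

/-- BEC pseudoweight: size of the support. -/
noncomputable def wBEC {κ : Type*} (x : κ → ℝ) : ℕ :=
  Set.ncard {i | x i ≠ 0}

/-- Hamming weight of a vector over GF(2). -/
def hammingWt {κ : Type*} [Fintype κ] (c : κ → ZMod 2) : ℕ :=
  (Finset.univ.filter (fun i => c i ≠ 0)).card

/-!
The `i`-th coordinate of the codeword `uG` is `u ⬝ g_i`, with `g_i` the `i`-th column, and a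
subcode `D` is the image of a subspace `U` of messages. A codeword `uG ∈ C_{supp D}` with
`u ∉ U` means that every column functional nonzero at `u` is nonzero somewhere on `U`; but some
functional `p` vanishes on `U` and not at `u`, so the point `p` is not a column. Conversely, if
the point `p` is not a column, every nonzero column is independent of `p`, so the hyperplane
`p^⊥` of messages already gives a subcode of full support; by full rank it is a proper subcode,
while `C_{supp D} = C`.
-/

open Matrix Submodule

variable {K m n : Type*} [Field K] [Fintype m]

theorem exists_dotProduct_ne_zero_of_notMem {U : Submodule K (m → K)} {x : m → K}
    (hx : x ∉ U) :
    ∃ p : m → K, (∀ v ∈ U, p ⬝ᵥ v = 0) ∧ p ⬝ᵥ x ≠ 0 := by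
  classical
  obtain ⟨f, hfx, hfU⟩ := U.exists_dual_map_eq_bot_of_notMem hx inferInstance
  have hf : ∀ v, (dotProductEquiv K m).symm f ⬝ᵥ v = f v :=
    LinearMap.congr_fun ((dotProductEquiv K m).apply_symm_apply f)
  refine ⟨(dotProductEquiv K m).symm f, fun v hv => ?_, by rwa [hf]⟩
  rw [hf, ← mem_bot K, ← hfU]
  exact mem_map_of_mem hv

theorem mem_span_singleton_of_mem_span_singleton_of_ne_zero {M : Type*} [AddCommGroup M]
    [Module K M] {x y : M} (hx : x ≠ 0) (h : x ∈ K ∙ y) : y ∈ K ∙ x := by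
  obtain ⟨a, rfl⟩ := mem_span_singleton.1 h
  have ha : a ≠ 0 := by
    rintro rfl
    exact hx (zero_smul K y)
  rw [span_singleton_smul_eq (IsUnit.mk0 a ha)]
  exact mem_span_singleton_self y

theorem mem_span_singleton_zmod_two_iff {M : Type*} [AddCommGroup M] [Module (ZMod 2) M]
    {p g : M} (hp : p ≠ 0) : p ∈ ZMod 2 ∙ g ↔ g = p := by
  refine ⟨fun h => ?_, fun h => h ▸ mem_span_singleton_self g⟩
  obtain ⟨a, rfl⟩ := mem_span_singleton.1 h
  fin_cases a
  · exact absurd (zero_smul _ g) hp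
  · exact (one_smul _ g).symm

theorem Matrix.vecMul_injective_of_rank_eq_card [Fintype n] {G : Matrix m n K}
    (h : G.rank = Fintype.card m) : Function.Injective G.vecMul := by
  rw [vecMul_injective_iff, linearIndependent_iff_card_eq_finrank_span, Set.finrank,
    ← rank_eq_finrank_span_row, h]

def IsSubcodeComplete (G : Matrix m n K) : Prop :=
  ∀ D : Submodule K (n → K),
    (D : Set (n → K)) ⊆ Set.range (fun u => Matrix.vecMul u G) →
    (D : Set (n → K)) =
      {c | c ∈ Set.range (fun u => Matrix.vecMul u G) ∧
           ∀ i, c i ≠ 0 → ∃ c' ∈ (D : Set (n → K)), c' i ≠ 0}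

theorem isSubcodeComplete_of_forall_mem_span_col {G : Matrix m n K}
    (hG : ∀ p : m → K, p ≠ 0 → ∃ i, p ∈ K ∙ fun j => G j i) :
    IsSubcodeComplete G := by
  intro D hD
  ext c
  refine ⟨fun hc => ⟨hD hc, fun i hi => ⟨c, hc, hi⟩⟩, ?_⟩
  rintro ⟨⟨u, rfl⟩, hsupp⟩
  by_contra hu
  obtain ⟨p, hpD, hpu⟩ :=
    exists_dotProduct_ne_zero_of_notMem (U := D.comap (vecMulLinear G)) (x := u) hu
  obtain ⟨i, hi⟩ := hG p (by rintro rfl; simp at hpu)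
  obtain ⟨a, rfl⟩ := mem_span_singleton.1 hi
  have hcol : ∀ v, (a • fun j => G j i) ⬝ᵥ v = a * vecMul v G i := fun v => by
    rw [smul_dotProduct, dotProduct_comm, smul_eq_mul]
    rfl
  obtain ⟨c', hc'D, hc'i⟩ := hsupp i (right_ne_zero_of_mul (hcol u ▸ hpu))
  obtain ⟨v, rfl⟩ := hD hc'D
  have hv := hpD v hc'D
  rw [hcol, mul_eq_zero] at hv
  exact hv.elim (fun ha => hpu (by rw [ha, zero_smul, zero_dotProduct])) hc'i

theorem exists_mem_span_col_of_isSubcodeComplete {G : Matrix m n K}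
    (hG : Function.Injective G.vecMul) (h : IsSubcodeComplete G) {p : m → K} (hp : p ≠ 0) :
    ∃ i, p ∈ K ∙ fun j => G j i := by
  classical
  by_contra! hnot
  let D := (LinearMap.ker (dotProductEquiv K m p)).map (vecMulLinear G)
  obtain ⟨u, hu⟩ : ∃ u, p ⬝ᵥ u ≠ 0 := by
    by_contra! h0
    exact hp (dotProduct_eq_zero p h0)
  have huD : vecMul u G ∈ (D : Set (n → K)) := by
    rw [h D (by rintro _ ⟨v, -, rfl⟩; exact ⟨v, rfl⟩)]
    refine ⟨⟨u, rfl⟩, fun i hi => ?_⟩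
    have hgi : (fun j => G j i) ≠ 0 := fun h0 =>
      hi (by change u ⬝ᵥ _ = 0; rw [h0, dotProduct_zero])
    obtain ⟨q, hqp, hqg⟩ := exists_dotProduct_ne_zero_of_notMem fun hmem =>
      hnot i (mem_span_singleton_of_mem_span_singleton_of_ne_zero hgi hmem)
    refine ⟨vecMul q G, mem_map_of_mem ?_, hqg⟩
    simpa [dotProduct_comm] using hqp p (mem_span_singleton_self p)
  obtain ⟨v, hv, huv⟩ := mem_map.1 huD
  rw [hG huv] at hv
  exact hu (by simpa using hv)

theorem subcodeComplete_iff_all_points_general {k n : ℕ}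
    (G : Matrix (Fin k) (Fin n) (ZMod 2)) (hrank : G.rank = k) :
    (∀ D : Submodule (ZMod 2) (Fin n → ZMod 2),
        (D : Set (Fin n → ZMod 2)) ⊆ Set.range (fun u => Matrix.vecMul u G) →
        (D : Set (Fin n → ZMod 2)) =
          {c | c ∈ Set.range (fun u => Matrix.vecMul u G) ∧
               ∀ i, c i ≠ 0 → ∃ c' ∈ (D : Set (Fin n → ZMod 2)), c' i ≠ 0}) ↔
    (∀ p : Fin k → ZMod 2, p ≠ 0 → ∃ i : Fin n, (fun j => G j i) = p) := by
  have hinj : Function.Injective G.vecMul :=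
    vecMul_injective_of_rank_eq_card (by rw [hrank, Fintype.card_fin])
  refine ⟨fun h p hp => ?_, fun h => isSubcodeComplete_of_forall_mem_span_col fun p hp => ?_⟩
  · obtain ⟨i, hi⟩ := exists_mem_span_col_of_isSubcodeComplete hinj h hp
    exact ⟨i, (mem_span_singleton_zmod_two_iff hp).1 hi⟩
  · obtain ⟨i, hi⟩ := h p hp
    exact ⟨i, (mem_span_singleton_zmod_two_iff hp).2 hi⟩

/-- A k-dimensional binary code generated by G (with nonzero columns) is
    subcode-complete iff every nonzero vector of GF(2)^k appears among the
    columns of G. -/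
theorem subcodeComplete_iff_all_points {k n : ℕ}
    (G : Matrix (Fin k) (Fin n) (ZMod 2)) (hrank : G.rank = k)
    (hcols : ∀ i : Fin n, (fun j => G j i) ≠ 0) :
    (∀ D : Submodule (ZMod 2) (Fin n → ZMod 2),
        (D : Set (Fin n → ZMod 2)) ⊆ Set.range (fun u => Matrix.vecMul u G) →
        (D : Set (Fin n → ZMod 2)) =
          {c | c ∈ Set.range (fun u => Matrix.vecMul u G) ∧
               ∀ i, c i ≠ 0 → ∃ c' ∈ (D : Set (Fin n → ZMod 2)), c' i ≠ 0}) ↔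
    (∀ p : Fin k → ZMod 2, p ≠ 0 → ∃ i : Fin n, (fun j => G j i) = p) :=
  subcodeComplete_iff_all_points_general G hrank
end

section
/- Any binary linear constant-weight code of dimension k has a generator matrix in which every nonzero vector of GF(2)^k appears the same number of times as a column; consequently, if the code has length n and minimum distance d, then n = (2^k − 1)·m and d = 2^{k−1}·m for some positive integer m. -/
open Finset Matrix

namespace BinaryCode

variable {ι κ : Type*} [Fintype ι] [Fintype κ]

def signChar : AddChar (ZMod 2) ℤ := AddChar.zmodChar 2 (by norm_num : (-1 : ℤ) ^ 2 = 1)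

lemma signChar_apply (a : ZMod 2) : signChar a = if a = 0 then 1 else -1 := by
  fin_cases a <;> rfl

lemma sum_signChar_eq (c : ι → ZMod 2) :
    ∑ i, signChar (c i) = Fintype.card ι - 2 * (hammingWt c : ℤ) := by
  have hsplit := card_filter_add_card_filter_not (s := univ) (fun i => c i = 0)
  simp only [signChar_apply, sum_ite, sum_const, card_univ] at hsplit ⊢
  simp only [hammingWt, nsmul_eq_mul, mul_one, mul_neg_one]
  rw [← hsplit]
  push_cast
  ring

lemma sum_signChar_dotProduct [DecidableEq κ] (q : κ → ZMod 2) :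
    ∑ u : κ → ZMod 2, signChar (u ⬝ᵥ q) = if q = 0 then 2 ^ Fintype.card κ else 0 := by
  split_ifs with hq
  · simp [hq]
  obtain ⟨j, hj⟩ := Function.ne_iff.mp hq
  let ψ := signChar.compAddMonoidHom
    (AddMonoidHom.mk' (· ⬝ᵥ q) fun u v => add_dotProduct u v q)
  refine AddChar.sum_eq_zero_of_ne_one (ψ := ψ) (AddChar.ne_one_iff.mpr ⟨Pi.single j 1, ?_⟩)
  have hqj : q j = 1 := (by decide : ∀ a : ZMod 2, a ≠ 0 → a = 1) _ hj
  simp [ψ, single_dotProduct, hqj, signChar_apply]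

def colCount (G : Matrix κ ι (ZMod 2)) (p : κ → ZMod 2) : ℕ :=
  #{i | (fun j => G j i) = p}

lemma two_pow_mul_colCount [DecidableEq κ] (G : Matrix κ ι (ZMod 2)) (p : κ → ZMod 2) :
    2 ^ Fintype.card κ * (colCount G p : ℤ) =
      ∑ u, signChar (u ⬝ᵥ p) * ∑ i, signChar ((u ᵥ* G) i) := by
  simp_rw [mul_sum]
  rw [sum_comm]
  simp_rw [vecMul, ← AddChar.map_add_eq_mul, ← dotProduct_add, sum_signChar_dotProduct]
  have hneg : -p = p := funext fun j => ZMod.neg_eq_self_mod_two (p j)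
  simp_rw [add_eq_zero_iff_eq_neg', hneg, ← sum_filter, sum_const, nsmul_eq_mul, colCount]
  ring

lemma two_pow_mul_colCount_of_hammingWt_eq [DecidableEq κ] {G : Matrix κ ι (ZMod 2)} {w : ℕ}
    (hw : ∀ u, u ≠ 0 → hammingWt (u ᵥ* G) = w) {p : κ → ZMod 2} (hp : p ≠ 0) :
    2 ^ Fintype.card κ * colCount G p = 2 * w := by
  have hrow (u : κ → ZMod 2) : ∑ i, signChar ((u ᵥ* G) i) =
      (Fintype.card ι - 2 * w : ℤ) + if u = 0 then 2 * (w : ℤ) else 0 := by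
    rw [sum_signChar_eq]
    split_ifs with hu
    · simp [hu, hammingWt]
    · rw [hw u hu]
      ring
  have h := two_pow_mul_colCount G p
  simp only [hrow, mul_add, sum_add_distrib, ← sum_mul, sum_signChar_dotProduct, if_neg hp,
    mul_ite, mul_zero, sum_ite_eq', mem_univ, if_true, zero_dotProduct, AddChar.map_zero_eq_one,
    one_mul, zero_mul, zero_add] at h
  exact_mod_cast h

lemma sum_colCount [DecidableEq κ] (G : Matrix κ ι (ZMod 2)) :
    ∑ p, colCount G p = Fintype.card ι :=
  (card_eq_sum_card_fiberwise (f := fun i j => G j i) fun _ _ => mem_univ _).symm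

lemma colCount_zero {G : Matrix κ ι (ZMod 2)} (hG : ∀ i, ∃ u, (u ᵥ* G) i ≠ 0) :
    colCount G 0 = 0 := by
  refine card_eq_zero.mpr (filter_eq_empty_iff.mpr fun i _ hcol => ?_)
  obtain ⟨u, hu⟩ := hG i
  exact hu (by simp [vecMul, hcol])

lemma card_eq_mul_of_colCount_eq [DecidableEq κ] {G : Matrix κ ι (ZMod 2)} {m : ℕ}
    (h0 : colCount G 0 = 0) (hm : ∀ p, p ≠ 0 → colCount G p = m) :
    Fintype.card ι = (2 ^ Fintype.card κ - 1) * m := by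
  rw [← sum_colCount G, ← add_sum_erase _ _ (mem_univ 0), h0, zero_add,
    sum_congr rfl fun p hp => hm p (ne_of_mem_erase hp), sum_const, smul_eq_mul,
    card_erase_of_mem (mem_univ _), card_univ, Fintype.card_fun, ZMod.card]

end BinaryCode

namespace Module.Basis

variable {ι κ R : Type*} [Fintype κ] [CommRing R] {C : Submodule R (ι → R)}

lemma vecMul_of_coe (b : Basis κ R C) (u : κ → R) :
    u ᵥ* Matrix.of (fun j => (b j : ι → R)) = b.equivFun.symm u := by
  rw [vecMul_eq_sum, b.equivFun_symm_apply, Submodule.coe_sum]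
  rfl

lemma range_vecMul_of_coe (b : Basis κ R C) :
    Set.range (· ᵥ* Matrix.of (fun j => (b j : ι → R))) = C := by
  simp_rw [b.vecMul_of_coe]
  exact (b.equivFun.symm.surjective.range_comp Subtype.val).trans Subtype.range_coe

lemma vecMul_of_coe_injective (b : Basis κ R C) :
    Function.Injective (· ᵥ* Matrix.of (fun j => (b j : ι → R))) := by
  simp_rw [b.vecMul_of_coe]
  exact Subtype.val_injective.comp b.equivFun.symm.injective

end Module.Basis

open BinaryCode

/-- A binary linear constant-weight code of dimension k (with no zero coordinate)
    has a generator matrix in which every nonzero vector of GF(2)^k appears the same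
    number m of times as a column; consequently n = (2^k - 1) m and the constant
    weight is 2^(k-1) m. -/
theorem constant_weight_code_structure {n k w : ℕ} (hk : 0 < k)
    (C : Submodule (ZMod 2) (Fin n → ZMod 2))
    (hdim : Module.finrank (ZMod 2) C = k)
    (hw : ∀ c ∈ C, c ≠ 0 → hammingWt c = w)
    (hfull : ∀ i : Fin n, ∃ c ∈ C, c i ≠ 0) :
    ∃ m : ℕ, 0 < m ∧
      (∃ G : Matrix (Fin k) (Fin n) (ZMod 2),
        Set.range (fun u => Matrix.vecMul u G) = (C : Set (Fin n → ZMod 2)) ∧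
        ∀ p : Fin k → ZMod 2, p ≠ 0 →
          (Finset.univ.filter (fun i : Fin n => (fun j => G j i) = p)).card = m) ∧
      n = (2 ^ k - 1) * m ∧ w = 2 ^ (k - 1) * m := by
  have : NeZero k := ⟨hk.ne'⟩
  let b := Module.finBasisOfFinrankEq (ZMod 2) C hdim
  let G : Matrix (Fin k) (Fin n) (ZMod 2) := .of fun j => (b j : Fin n → ZMod 2)
  have hrange : Set.range (· ᵥ* G) = (C : Set (Fin n → ZMod 2)) := b.range_vecMul_of_coe
  have hmem (u : Fin k → ZMod 2) : u ᵥ* G ∈ C :=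
    SetLike.mem_coe.mp (hrange ▸ Set.mem_range_self u)
  have hne {u : Fin k → ZMod 2} (hu : u ≠ 0) : u ᵥ* G ≠ 0 :=
    (b.vecMul_of_coe_injective.ne_iff' (zero_vecMul G)).mpr hu
  have hcount (p : Fin k → ZMod 2) (hp : p ≠ 0) : 2 ^ k * colCount G p = 2 * w := by
    simpa using two_pow_mul_colCount_of_hammingWt_eq (fun u hu => hw _ (hmem u) (hne hu)) hp
  obtain ⟨p₀, hp₀⟩ := exists_ne (0 : Fin k → ZMod 2)
  have hall (p : Fin k → ZMod 2) (hp : p ≠ 0) : colCount G p = colCount G p₀ :=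
    Nat.eq_of_mul_eq_mul_left (by positivity) ((hcount p hp).trans (hcount p₀ hp₀).symm)
  have hzero : colCount G 0 = 0 := colCount_zero fun i => by
    obtain ⟨c, hc, hci⟩ := hfull i
    obtain ⟨u, rfl⟩ : c ∈ Set.range (· ᵥ* G) := hrange ▸ hc
    exact ⟨u, hci⟩
  have hn : n = (2 ^ k - 1) * colCount G p₀ := by
    simpa using card_eq_mul_of_colCount_eq hzero hall
  have hkn : k ≤ n := hdim ▸ (Submodule.finrank_le C).trans_eq (Module.finrank_fin_fun _)
  refine ⟨colCount G p₀, Nat.pos_of_ne_zero fun hm => ?_, ⟨G, hrange, hall⟩, hn, ?_⟩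
  · rw [hm, mul_zero] at hn
    omega
  · have := hcount p₀ hp₀
    rw [← Nat.two_pow_pred_mul_two hk] at this
    linarith
end

section
/- Let C be an [n,k,d] binary code with minimum max-fractional pseudoweight d with respect to some parity-check matrix H with ρ rows. Let C' be the [n', k, d] code obtained by repeating certain coordinates of C (each coordinate i repeated θ_i ≥ 0 additional times) in such a way that the minimum distance stays d. Then C' admits a parity-check matrix H' with ρ + (n' − n) rows whose minimum max-fractional pseudoweight equals d. -/
/-- The coordinate-duplication map: coordinate i is repeated θ i additional times. -/
def dup {n : ℕ} (θ : Fin n → ℕ) (c : Fin n → ZMod 2) :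
    (Fin n ⊕ (Σ i : Fin n, Fin (θ i))) → ZMod 2 :=
  fun i => match i with
  | .inl i => c i
  | .inr ⟨i, _⟩ => c i


/-! The parity-check matrix of the repeated code is the block matrix `[[H, 0], [P, I]]`, where each
row of `[P, I]` identifies a new coordinate with the coordinate it repeats. A weight-two row forces
the two coordinates of a fundamental-cone vector to agree, so the cone of the new matrix consists of
the repeated vectors `(y, y ∘ π)` with `y ∈ K(H)`. Repeating coordinates keeps the maximum and can
only increase the sum, so the max-fractional weight does not drop below `d`. Conversely, the
indicator of a minimum-weight codeword of the repeated code lies in the cone and has max-fractional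
weight equal to its Hamming weight `d`. -/

open Matrix Function

lemma zmod_two_ne_zero_iff (a : ZMod 2) : a ≠ 0 ↔ a = 1 := by
  revert a; decide

lemma exists_ne_ne_zero_of_sum_eq_zero {κ M : Type*} [Fintype κ] [AddCommMonoid M] {f : κ → M}
    (hf : ∑ i, f i = 0) {ℓ : κ} (hℓ : f ℓ ≠ 0) : ∃ i ≠ ℓ, f i ≠ 0 := by
  by_contra! h
  rw [Finset.sum_eq_single ℓ (fun i _ hi => h i hi) (by simp)] at hf
  exact hℓ hf

section Cone

variable {ι κ : Type*} [Fintype ι] [Fintype κ] [DecidableEq κ] {M : Matrix ι κ (ZMod 2)}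

/-- A check containing a support coordinate `ℓ` of a codeword contains a second one, since the
restriction of the codeword to the check has even weight. -/
lemma indicator_support_mem_fundCone {c : κ → ZMod 2} (hc : M *ᵥ c = 0) :
    (support c).indicator (1 : κ → ℝ) ∈ fundCone M := by
  have hnonneg : ∀ k, 0 ≤ (support c).indicator (1 : κ → ℝ) k :=
    Set.indicator_nonneg fun _ _ => zero_le_one
  refine ⟨hnonneg, fun j ℓ hjℓ => ?_⟩
  by_cases hcℓ : c ℓ = 0
  · rw [Set.indicator_of_notMem (by simpa using hcℓ)]
    exact Finset.sum_nonneg fun k _ => hnonneg k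
  obtain ⟨i, hiℓ, hi⟩ : ∃ i ≠ ℓ, M j i * c i ≠ 0 :=
    exists_ne_ne_zero_of_sum_eq_zero (congrFun hc j) (by simpa [hjℓ] using hcℓ)
  have hMi : M j i = 1 := (zmod_two_ne_zero_iff _).1 (left_ne_zero_of_mul hi)
  calc (support c).indicator (1 : κ → ℝ) ℓ = (support c).indicator 1 i := by
        simp [hcℓ, right_ne_zero_of_mul hi]
    _ ≤ _ := Finset.single_le_sum (fun k _ => hnonneg k) (by simp [hMi, hiℓ])

lemma fundCone.eq_of_row_eq_one_iff {x : κ → ℝ} (hx : x ∈ fundCone M) {j : ι} {a b : κ}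
    (hab : a ≠ b) (hrow : ∀ k, M j k = 1 ↔ k = a ∨ k = b) : x a = x b := by
  have key : ∀ {a b : κ}, a ≠ b → (∀ k, M j k = 1 ↔ k = a ∨ k = b) → x a ≤ x b := by
    intro a b hab hrow
    have hfilter : Finset.univ.filter (fun k => M j k = 1 ∧ k ≠ a) = {b} := by
      ext k
      simp only [Finset.mem_filter, Finset.mem_univ, true_and, Finset.mem_singleton, hrow]
      constructor
      · rintro ⟨rfl | rfl, hk⟩ <;> trivial
      · rintro rfl; exact ⟨Or.inr rfl, hab.symm⟩
    simpa [hfilter] using hx.2 j a ((hrow a).2 (Or.inl rfl))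
  exact le_antisymm (key hab hrow) (key hab.symm fun k => (hrow k).trans or_comm)

end Cone

lemma wMaxfrac_indicator_support {κ : Type*} [Fintype κ] {c : κ → ZMod 2} (hc : c ≠ 0) :
    wMaxfrac ((support c).indicator (1 : κ → ℝ)) = hammingWt c := by
  obtain ⟨i, hi⟩ : ∃ i, c i ≠ 0 := Function.ne_iff.1 hc
  have hmax : ⨆ k, (support c).indicator (1 : κ → ℝ) k = 1 := by
    refine le_antisymm (Real.iSup_le (fun k => Set.indicator_apply_le' (fun _ => le_rfl)
      (fun _ => zero_le_one)) zero_le_one) ?_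
    calc (1 : ℝ) = (support c).indicator 1 i := by rw [Set.indicator_of_mem hi]; rfl
      _ ≤ _ := le_ciSup (Finite.bddAbove_range _) i
  rw [wMaxfrac, hmax, div_one, hammingWt, ← Finset.sum_boole]
  exact Finset.sum_congr rfl fun k _ => by by_cases h : c k = 0 <;> simp [h]

lemma wMaxfrac_le_wMaxfrac_sum_elim {κ σ : Type*} [Fintype κ] [Fintype σ] {y : κ → ℝ}
    (hy : ∀ i, 0 ≤ y i) (π : σ → κ) : wMaxfrac y ≤ wMaxfrac (Sum.elim y (y ∘ π)) := by
  have hmax : ⨆ k, Sum.elim y (y ∘ π) k = ⨆ i, y i := by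
    have hy' : ∀ k, 0 ≤ Sum.elim y (y ∘ π) k := by rintro (i | s) <;> exact hy _
    refine le_antisymm (Real.iSup_le ?_ (Real.iSup_nonneg hy))
      (Real.iSup_le (fun i => ?_) (Real.iSup_nonneg hy'))
    · rintro (i | s)
      exacts [le_ciSup (Finite.bddAbove_range y) i, le_ciSup (Finite.bddAbove_range y) (π s)]
    · exact le_ciSup (Finite.bddAbove_range (Sum.elim y (y ∘ π))) (Sum.inl i)
  have hsum : ∑ i, y i ≤ ∑ k, Sum.elim y (y ∘ π) k := by
    rw [Fintype.sum_sum_type]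
    exact le_add_of_nonneg_right (Finset.sum_nonneg fun s _ => hy _)
  rw [wMaxfrac, wMaxfrac, hmax]
  exact div_le_div_of_nonneg_right hsum (Real.iSup_nonneg hy)

section Repeat

variable {R ι κ σ : Type*} [DecidableEq κ] [DecidableEq σ]

def repeatCheckMatrix [Zero R] [One R] (H : Matrix ι κ R) (π : σ → κ) :
    Matrix (ι ⊕ σ) (κ ⊕ σ) R :=
  fromBlocks H 0 ((1 : Matrix κ κ R).submatrix π id) 1

lemma repeatCheckMatrix_inr_apply_eq_one_iff [Zero R] [One R] [NeZero (1 : R)]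
    (H : Matrix ι κ R) (π : σ → κ) (s : σ) (k : κ ⊕ σ) :
    repeatCheckMatrix H π (Sum.inr s) k = 1 ↔ k = Sum.inl (π s) ∨ k = Sum.inr s := by
  rcases k with i | t <;> simp [repeatCheckMatrix, one_apply, eq_comm]

variable [Fintype κ] [Fintype σ]

lemma repeatCheckMatrix_mulVec [NonAssocSemiring R] (H : Matrix ι κ R) (π : σ → κ)
    (x : κ ⊕ σ → R) :
    repeatCheckMatrix H π *ᵥ x =
      Sum.elim (H *ᵥ (x ∘ Sum.inl)) (fun s => x (Sum.inl (π s)) + x (Sum.inr s)) := by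
  rw [repeatCheckMatrix, fromBlocks_mulVec]
  congr 1
  · simp
  · ext s
    simp [mulVec, dotProduct, one_apply]

lemma ker_repeatCheckMatrix [Ring R] [CharP R 2] (H : Matrix ι κ R) (π : σ → κ) :
    {x | repeatCheckMatrix H π *ᵥ x = 0} = (fun c => Sum.elim c (c ∘ π)) '' {c | H *ᵥ c = 0} := by
  ext x
  simp only [Set.mem_ofPred_eq, Set.mem_image, repeatCheckMatrix_mulVec]
  constructor
  · intro hx
    refine ⟨x ∘ Sum.inl, funext fun j => congrFun hx (Sum.inl j), ?_⟩
    ext (i | s)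
    · rfl
    · exact CharTwo.add_eq_zero.1 (congrFun hx (Sum.inr s))
  · rintro ⟨c, hc, rfl⟩
    ext (j | s)
    · exact congrFun hc j
    · exact CharTwo.add_self_eq_zero _

lemma exists_mem_fundCone_of_mem_fundCone_repeatCheckMatrix [Fintype ι]
    {H : Matrix ι κ (ZMod 2)} {π : σ → κ} {x : κ ⊕ σ → ℝ}
    (hx : x ∈ fundCone (repeatCheckMatrix H π)) :
    ∃ y ∈ fundCone H, x = Sum.elim y (y ∘ π) := by
  refine ⟨x ∘ Sum.inl, ⟨fun i => hx.1 _, fun j ℓ hjℓ => ?_⟩, ?_⟩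
  · refine (hx.2 (Sum.inl j) (Sum.inl ℓ) (by simpa [repeatCheckMatrix] using hjℓ)).trans_eq ?_
    rw [Finset.sum_filter, Finset.sum_filter, Fintype.sum_sum_type]
    simp [repeatCheckMatrix]
  · ext (i | s)
    · rfl
    · exact (fundCone.eq_of_row_eq_one_iff hx Sum.inl_ne_inr
        (repeatCheckMatrix_inr_apply_eq_one_iff H π s)).symm

end Repeat

lemma dup_eq_sum_elim {n : ℕ} (θ : Fin n → ℕ) :
    dup θ = fun c => Sum.elim c (c ∘ Sigma.fst) := by
  funext c k
  rcases k with _ | _ <;> rfl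

theorem pseudoredundancy_repeat_coordinates_general {ρ n : ℕ} (d : ℕ)
    (H : Matrix (Fin ρ) (Fin n) (ZMod 2)) (θ : Fin n → ℕ)
    (C : Set (Fin n → ZMod 2)) (hC : C = {c | H.mulVec c = 0})
    (hpw_min : ∀ x ∈ fundCone H, x ≠ 0 → (d : ℝ) ≤ wMaxfrac x)
    (hd' : ∃ c ∈ C, c ≠ 0 ∧ hammingWt (dup θ c) = d) :
    ∃ H' : Matrix (Fin ρ ⊕ (Σ i : Fin n, Fin (θ i)))
                  (Fin n ⊕ (Σ i : Fin n, Fin (θ i))) (ZMod 2),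
      {c' | H'.mulVec c' = 0} = (dup θ) '' C ∧
      (∀ x ∈ fundCone H', x ≠ 0 → (d : ℝ) ≤ wMaxfrac x) ∧
      (∃ x ∈ fundCone H', x ≠ 0 ∧ wMaxfrac x = (d : ℝ)) := by
  have hker : {c' | repeatCheckMatrix H Sigma.fst *ᵥ c' = 0} = dup θ '' C := by
    rw [dup_eq_sum_elim, hC, ker_repeatCheckMatrix]
  refine ⟨repeatCheckMatrix H Sigma.fst, hker, ?_, ?_⟩
  · intro x hx hx0
    obtain ⟨y, hy, rfl⟩ := exists_mem_fundCone_of_mem_fundCone_repeatCheckMatrix hx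
    have hy0 : y ≠ 0 := by
      rintro rfl
      exact hx0 (by ext (_ | _) <;> rfl)
    exact (hpw_min y hy hy0).trans (wMaxfrac_le_wMaxfrac_sum_elim hy.1 _)
  · obtain ⟨c, hcC, hc0, hwt⟩ := hd'
    have hc'0 : dup θ c ≠ 0 := fun h => hc0 (funext fun i => congrFun h (Sum.inl i))
    have hc'ker : repeatCheckMatrix H Sigma.fst *ᵥ dup θ c = 0 := by
      have hmem : dup θ c ∈ dup θ '' C := Set.mem_image_of_mem _ hcC
      rwa [← hker] at hmem
    refine ⟨_, indicator_support_mem_fundCone hc'ker, ?_,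
      by rw [wMaxfrac_indicator_support hc'0, hwt]⟩
    obtain ⟨k, hk⟩ : ∃ k, dup θ c k ≠ 0 := Function.ne_iff.1 hc'0
    exact fun h => hk (by simpa using congrFun h k)

/-- If C has a parity-check matrix H with ρ rows whose minimum max-fractional
    pseudoweight equals d = d(C), and C' is obtained from C by repeating each
    coordinate i an additional θ i times in such a way that the minimum distance
    stays d, then C' has a parity-check matrix with ρ + (n' - n) rows whose minimum
    max-fractional pseudoweight equals d. -/
theorem pseudoredundancy_repeat_coordinates {ρ n : ℕ} (d : ℕ)
    (H : Matrix (Fin ρ) (Fin n) (ZMod 2)) (θ : Fin n → ℕ)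
    (C : Set (Fin n → ZMod 2)) (hC : C = {c | H.mulVec c = 0})
    (hd_min : ∀ c ∈ C, c ≠ 0 → d ≤ hammingWt c)
    (hd_ex : ∃ c ∈ C, c ≠ 0 ∧ hammingWt c = d)
    (hpw_min : ∀ x ∈ fundCone H, x ≠ 0 → (d : ℝ) ≤ wMaxfrac x)
    (hpw_ex : ∃ x ∈ fundCone H, x ≠ 0 ∧ wMaxfrac x = (d : ℝ))
    (hd' : ∃ c ∈ C, c ≠ 0 ∧ hammingWt (dup θ c) = d) :
    ∃ H' : Matrix (Fin ρ ⊕ (Σ i : Fin n, Fin (θ i)))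
                  (Fin n ⊕ (Σ i : Fin n, Fin (θ i))) (ZMod 2),
      {c' | H'.mulVec c' = 0} = (dup θ) '' C ∧
      (∀ x ∈ fundCone H', x ≠ 0 → (d : ℝ) ≤ wMaxfrac x) ∧
      (∃ x ∈ fundCone H', x ≠ 0 ∧ wMaxfrac x = (d : ℝ)) :=
  pseudoredundancy_repeat_coordinates_general d H θ C hC hpw_min hd'
end

section
/- Let H be a parity-check matrix of a binary [n,k,d] code C whose minimum max-fractional pseudoweight equals d, and let I' ⊆ {1,…,n}. Let H_{I'} be the submatrix of H consisting of the columns indexed by I'. Then every nonzero x in the fundamental cone K(H_{I'}) satisfies w_maxfrac(x) ≥ d; in particular, if the punctured shortened code C'_{I'} (the restriction of C_{I'} = {c ∈ C : supp(c) ⊆ I'} to the coordinates I') has minimum distance d, then its minimum max-fractional pseudoweight with respect to H_{I'} equals d. -/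
/-
Extending a vector of `K(H_{I'})` by zeros gives a vector of `K(H)`: every row inequality of `H`
either has a zero left-hand side or, after dropping the zero coordinates, is a row inequality of
`H_{I'}` with possibly more nonnegative terms on the right. Extension by zeros changes neither
the sum nor (for nonnegative vectors) the maximum, so the lower bound `d` on the max-fractional
weight is inherited. Conversely, a codeword of weight `d` supported in `I'` restricts to a
codeword of the shortened code, and the indicator vector of a codeword lies in the fundamental
cone, because every parity check meets the support of a codeword in an even number of places.
-/

open Function Matrix

section Extension

variable {ι κ κ' : Type*} {e : κ' → κ}

lemma extend_zero_nonneg {x : κ' → ℝ} (hx : ∀ a, 0 ≤ x a) (i : κ) :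
    0 ≤ extend e x 0 i := by
  classical
  rw [extend_def]
  split_ifs
  exacts [hx _, le_rfl]

variable [Fintype κ] [Fintype κ']

lemma Function.Injective.sum_extend_zero (he : Injective e) {M : Type*} [AddCommMonoid M]
    (x : κ' → M) : ∑ i, extend e x 0 i = ∑ a, x a :=
  (Fintype.sum_of_injective e he x _ (fun _ hi => extend_apply' x (0 : κ → M) _ hi)
    (fun a => (he.extend_apply x 0 a).symm)).symm

lemma Function.Injective.iSup_extend_zero (he : Injective e) [Nonempty κ'] {x : κ' → ℝ}
    (hx : ∀ a, 0 ≤ x a) : ⨆ i, extend e x 0 i = ⨆ a, x a := by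
  classical
  have : Nonempty κ := Nonempty.map e ‹_›
  have hbdd : BddAbove (Set.range x) := (Set.finite_range x).bddAbove
  apply le_antisymm
  · refine ciSup_le fun i => ?_
    rw [extend_def]
    split_ifs
    · exact le_ciSup hbdd _
    · exact (hx (Classical.arbitrary κ')).trans (le_ciSup hbdd _)
  · refine ciSup_le fun a => ?_
    rw [← he.extend_apply x 0 a]
    exact le_ciSup (Set.finite_range _).bddAbove _

lemma Function.Injective.wMaxfrac_extend_zero (he : Injective e) [Nonempty κ'] {x : κ' → ℝ}
    (hx : ∀ a, 0 ≤ x a) : wMaxfrac (extend e x 0) = wMaxfrac x := by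
  rw [wMaxfrac, wMaxfrac, he.sum_extend_zero, he.iSup_extend_zero hx]

variable [Fintype ι] [DecidableEq κ] [DecidableEq κ']

lemma Function.Injective.extend_zero_mem_fundCone (he : Injective e)
    {H : Matrix ι κ (ZMod 2)} {x : κ' → ℝ} (hx : x ∈ fundCone (H.submatrix id e)) :
    extend e x 0 ∈ fundCone H := by
  obtain ⟨hx_nonneg, hx_row⟩ := hx
  refine ⟨extend_zero_nonneg hx_nonneg, fun j ℓ hℓ => ?_⟩
  by_cases hℓe : ∃ a, e a = ℓ
  · obtain ⟨a, rfl⟩ := hℓe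
    set A := Finset.univ.filter (fun b => H j (e b) = 1 ∧ b ≠ a)
    have hA : A.map ⟨e, he⟩ ⊆ Finset.univ.filter (fun i => H j i = 1 ∧ i ≠ e a) := by
      intro i hi
      obtain ⟨b, hb, rfl⟩ := Finset.mem_map.mp hi
      simp only [A, Finset.mem_filter, Finset.mem_univ, true_and] at hb ⊢
      exact ⟨hb.1, he.ne hb.2⟩
    calc extend e x 0 (e a) = x a := he.extend_apply x 0 a
      _ ≤ ∑ b ∈ A, x b := hx_row j a hℓ
      _ = ∑ i ∈ A.map ⟨e, he⟩, extend e x 0 i := by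
        simp only [Finset.sum_map, Embedding.coeFn_mk, he.extend_apply]
      _ ≤ _ := Finset.sum_le_sum_of_subset_of_nonneg hA
        fun i _ _ => extend_zero_nonneg hx_nonneg i
  · rw [extend_apply' _ _ _ hℓe, Pi.zero_apply]
    exact Finset.sum_nonneg fun i _ => extend_zero_nonneg hx_nonneg i

theorem le_wMaxfrac_of_mem_fundCone_submatrix (he : Injective e) {H : Matrix ι κ (ZMod 2)}
    {r : ℝ} (h : ∀ x ∈ fundCone H, x ≠ 0 → r ≤ wMaxfrac x) {x : κ' → ℝ}
    (hx : x ∈ fundCone (H.submatrix id e)) (hx0 : x ≠ 0) : r ≤ wMaxfrac x := by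
  obtain ⟨a, hxa⟩ := ne_iff.mp hx0
  have : Nonempty κ' := ⟨a⟩
  have hext0 : extend e x 0 ≠ 0 := ne_iff.mpr ⟨e a, by rwa [he.extend_apply]⟩
  rw [← he.wMaxfrac_extend_zero hx.1]
  exact h _ (he.extend_zero_mem_fundCone hx) hext0

end Extension

section Codewords

variable {ι κ κ' : Type*} [Fintype κ] [Fintype κ'] {H : Matrix ι κ (ZMod 2)}
  {c : κ → ZMod 2}

lemma exists_ne_of_mulVec_eq_zero (hc : H *ᵥ c = 0) {j : ι} {ℓ : κ} (hHℓ : H j ℓ = 1)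
    (hcℓ : c ℓ ≠ 0) : ∃ i ≠ ℓ, H j i = 1 ∧ c i ≠ 0 := by
  have eq_one : ∀ a : ZMod 2, a ≠ 0 → a = 1 := by decide
  by_contra! h
  have hrow : ∑ i, H j i * c i = H j ℓ * c ℓ :=
    Finset.sum_eq_single ℓ (fun i _ hi => by
      by_cases hHi : H j i = 0
      · rw [hHi, zero_mul]
      · rw [h i hi (eq_one _ hHi), mul_zero]) (by simp)
  have : (H *ᵥ c) j = 1 := by
    rw [Matrix.mulVec, dotProduct, hrow, hHℓ, eq_one _ hcℓ, mul_one]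
  simp [hc] at this

lemma indicator_mem_fundCone [Fintype ι] [DecidableEq κ] (hc : H *ᵥ c = 0) :
    (fun i => if c i ≠ 0 then (1 : ℝ) else 0) ∈ fundCone H := by
  have hnonneg : ∀ i, 0 ≤ if c i ≠ 0 then (1 : ℝ) else 0 := fun i => by positivity
  refine ⟨hnonneg, fun j ℓ hℓ => ?_⟩
  by_cases hcℓ : c ℓ = 0
  · simpa [hcℓ] using Finset.sum_nonneg fun i _ => hnonneg i
  · obtain ⟨i, hiℓ, hHi, hci⟩ := exists_ne_of_mulVec_eq_zero hc hℓ hcℓ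
    calc (if c ℓ ≠ 0 then (1 : ℝ) else 0) = if c i ≠ 0 then 1 else 0 := by simp [hcℓ, hci]
      _ ≤ _ := Finset.single_le_sum (fun i _ => hnonneg i) (by simp [hHi, hiℓ])

lemma wMaxfrac_indicator (hc0 : c ≠ 0) :
    wMaxfrac (fun i => if c i ≠ 0 then (1 : ℝ) else 0) = hammingWt c := by
  obtain ⟨i₀, hi₀⟩ : ∃ i, c i ≠ 0 := ne_iff.mp hc0
  have hsup : ⨆ i, (if c i ≠ 0 then (1 : ℝ) else 0) = 1 := by
    have : Nonempty κ := ⟨i₀⟩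
    refine le_antisymm (ciSup_le fun i => ?_) ?_
    · split_ifs <;> norm_num
    · calc (1 : ℝ) = if c i₀ ≠ 0 then 1 else 0 := by simp [hi₀]
        _ ≤ _ := le_ciSup (f := fun i => if c i ≠ 0 then (1 : ℝ) else 0)
          (Set.finite_range _).bddAbove i₀
  rw [wMaxfrac, hsup, div_one, Finset.sum_boole, hammingWt]

variable {e : κ' → κ}

lemma mulVec_submatrix_comp_eq_zero (he : Injective e) (hsupp : support c ⊆ Set.range e)
    (hc : H *ᵥ c = 0) : H.submatrix id e *ᵥ (c ∘ e) = 0 := by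
  ext j
  rw [← congrFun hc j]
  exact Fintype.sum_of_injective e he _ _
    (fun i hi => by simp [support_subset_iff'.mp hsupp i hi]) fun _ => rfl

lemma hammingWt_comp (he : Injective e) (hsupp : support c ⊆ Set.range e) :
    hammingWt (c ∘ e) = hammingWt c := by
  rw [hammingWt, hammingWt, Finset.card_filter, Finset.card_filter]
  exact Fintype.sum_of_injective e he _ _
    (fun i hi => by simp [support_subset_iff'.mp hsupp i hi]) fun _ => rfl

theorem exists_mem_fundCone_submatrix_wMaxfrac_eq_hammingWt [Fintype ι] [DecidableEq κ']
    (he : Injective e) (hc : H *ᵥ c = 0) (hc0 : c ≠ 0) (hsupp : support c ⊆ Set.range e) :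
    ∃ x ∈ fundCone (H.submatrix id e), x ≠ 0 ∧ wMaxfrac x = hammingWt c := by
  have hce0 : c ∘ e ≠ 0 := by
    obtain ⟨i, hi⟩ := ne_iff.mp hc0
    obtain ⟨a, rfl⟩ := hsupp hi
    exact ne_iff.mpr ⟨a, hi⟩
  refine ⟨_, indicator_mem_fundCone (mulVec_submatrix_comp_eq_zero he hsupp hc), ?_,
    by rw [wMaxfrac_indicator hce0, hammingWt_comp he hsupp]⟩
  obtain ⟨a, ha⟩ := ne_iff.mp hce0
  exact ne_iff.mpr ⟨a, by simpa using ha⟩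

end Codewords

theorem shortened_submatrix_pseudoweight_general {m n : ℕ} (d : ℕ)
    (H : Matrix (Fin m) (Fin n) (ZMod 2)) (I' : Finset (Fin n))
    (hpw_min : ∀ x ∈ fundCone H, x ≠ 0 → (d : ℝ) ≤ wMaxfrac x) :
    (∀ x ∈ fundCone (H.submatrix id (Subtype.val : {i // i ∈ I'} → Fin n)),
        x ≠ 0 → (d : ℝ) ≤ wMaxfrac x) ∧
    ((∃ c : Fin n → ZMod 2, H.mulVec c = 0 ∧ c ≠ 0 ∧
        (∀ i, c i ≠ 0 → i ∈ I') ∧ hammingWt c = d) →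
      ∃ x ∈ fundCone (H.submatrix id (Subtype.val : {i // i ∈ I'} → Fin n)),
        x ≠ 0 ∧ wMaxfrac x = (d : ℝ)) := by
  refine ⟨fun x => le_wMaxfrac_of_mem_fundCone_submatrix Subtype.val_injective hpw_min, ?_⟩
  rintro ⟨c, hc, hc0, hsupp, rfl⟩
  exact exists_mem_fundCone_submatrix_wMaxfrac_eq_hammingWt Subtype.val_injective hc hc0
    fun i hi => ⟨⟨i, hsupp i hi⟩, rfl⟩

/-- If the minimum max-fractional pseudoweight of H equals the minimum distance d
    of its code, then every nonzero x in the fundamental cone of the column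
    submatrix H_{I'} has max-fractional weight at least d; in particular, if the
    punctured shortened code has minimum distance d, the minimum max-fractional
    pseudoweight of H_{I'} equals d. -/
theorem shortened_submatrix_pseudoweight {m n : ℕ} (d : ℕ)
    (H : Matrix (Fin m) (Fin n) (ZMod 2)) (I' : Finset (Fin n))
    (hd_min : ∀ c : Fin n → ZMod 2, H.mulVec c = 0 → c ≠ 0 → d ≤ hammingWt c)
    (hd_ex : ∃ c : Fin n → ZMod 2, H.mulVec c = 0 ∧ c ≠ 0 ∧ hammingWt c = d)
    (hpw_min : ∀ x ∈ fundCone H, x ≠ 0 → (d : ℝ) ≤ wMaxfrac x)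
    (hpw_ex : ∃ x ∈ fundCone H, x ≠ 0 ∧ wMaxfrac x = (d : ℝ)) :
    (∀ x ∈ fundCone (H.submatrix id (Subtype.val : {i // i ∈ I'} → Fin n)),
        x ≠ 0 → (d : ℝ) ≤ wMaxfrac x) ∧
    ((∃ c : Fin n → ZMod 2, H.mulVec c = 0 ∧ c ≠ 0 ∧
        (∀ i, c i ≠ 0 → i ∈ I') ∧ hammingWt c = d) →
      ∃ x ∈ fundCone (H.submatrix id (Subtype.val : {i // i ∈ I'} → Fin n)),
        x ≠ 0 ∧ wMaxfrac x = (d : ℝ)) :=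
  shortened_submatrix_pseudoweight_general d H I' hpw_min
end

section
/- Consider the k-dimensional binary code C of length n = z_1 + ⋯ + z_k (z_i ≥ 1) whose generator matrix G has as columns the i-th standard basis vector e_i of GF(2)^k repeated z_i times. Let H be the (n−k)×n block-diagonal binary matrix with blocks H_1,…,H_k, where H_i is the (z_i−1)×z_i matrix with (H_i)_{s,t} = 1 iff t ∈ {s, s+1}. Then H is a parity-check matrix of C (i.e., HG^T = 0 and rank(H) = n−k), and every nonzero x in the fundamental cone K(H) satisfies w_maxfrac(x) ≥ d(C) = min_i z_i. -/
/-
Row `r` of `H` has exactly two ones, at consecutive positions `left r`, `right r` of one block.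
Over `GF(2)` this makes `H Gᵀ = 0`, and the matrix whose columns are indicators of initial segments
of blocks is a right inverse of `H` (the row sums telescope), so `H` has full row rank. A weight-two
row forces `x (left r) = x (right r)` on the fundamental cone, so `x` is constant on blocks; if the
maximum `M` of `x` is attained in block `i`, then `∑ x ≥ z i * M ≥ d(C) * M`.
-/

theorem Sigma.fin_ext_iff {ι : Type*} {n : ι → ℕ} {c d : Σ i, Fin (n i)} :
    c = d ↔ c.1 = d.1 ∧ (c.2 : ℕ) = d.2 := by
  constructor
  · rintro rfl
    exact ⟨rfl, rfl⟩
  · obtain ⟨i, s⟩ := c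
    obtain ⟨j, t⟩ := d
    rintro ⟨rfl, h⟩
    exact congrArg _ (Fin.ext h)

theorem Finset.card_filter_sigma_fst {ι : Type*} {α : ι → Type*} [Fintype ι]
    [∀ i, Fintype (α i)] (p : ι → Prop) [DecidablePred p] :
    (univ.filter fun c : Σ i, α i => p c.1).card = ∑ i ∈ univ.filter p, Fintype.card (α i) := by
  have hfilter : (univ.filter fun c : Σ i, α i => p c.1) = (univ.filter p).sigma fun _ => univ := by
    ext
    simp
  rw [hfilter, card_sigma]
  rfl

theorem Matrix.rank_eq_card_height_of_mul_eq_one {m n K : Type*} [Fintype m] [Fintype n]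
    [DecidableEq m] [CommSemiring K] [StrongRankCondition K] {A : Matrix m n K}
    {B : Matrix n m K} (h : A * B = 1) : A.rank = Fintype.card m :=
  le_antisymm A.rank_le_card_height (by simpa [h] using A.rank_mul_le_left B)

theorem eq_of_mem_fundCone_of_row_support_eq_pair {m κ : Type*} [Fintype m] [Fintype κ]
    [DecidableEq κ] {H : Matrix m κ (ZMod 2)} {x : κ → ℝ} (hx : x ∈ fundCone H) {j : m}
    {a b : κ} (hab : a ≠ b) (hrow : ∀ c, H j c = 1 ↔ c = a ∨ c = b) : x a = x b := by
  have hle : ∀ a b, a ≠ b → (∀ c, H j c = 1 ↔ c = a ∨ c = b) → x a ≤ x b := by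
    intro a b hab hrow
    have hothers : (Finset.univ.filter fun c => H j c = 1 ∧ c ≠ a) = {b} := by
      ext c
      simp only [Finset.mem_filter, Finset.mem_univ, true_and, Finset.mem_singleton, hrow]
      grind
    simpa [hothers] using hx.2 j a ((hrow a).2 (Or.inl rfl))
  exact le_antisymm (hle a b hab hrow) (hle b a hab.symm fun c => (hrow c).trans or_comm)

theorem le_wMaxfrac_of_forall_mul_le {κ : Type*} [Fintype κ] {x : κ → ℝ} {d : ℝ}
    (hx : ∀ i, 0 ≤ x i) (hx0 : x ≠ 0) (h : ∀ i, d * x i ≤ ∑ j, x j) : d ≤ wMaxfrac x := by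
  obtain ⟨i, hi⟩ := Function.ne_iff.mp hx0
  have : Nonempty κ := ⟨i⟩
  obtain ⟨m, hm⟩ := exists_eq_ciSup_of_finite (f := x)
  have hpos : 0 < x m :=
    (lt_of_le_of_ne (hx i) (Ne.symm hi)).trans_le (hm ▸ le_ciSup (Finite.bddAbove_range x) i)
  rw [wMaxfrac, ← hm, le_div_iff₀ hpos]
  exact h m

namespace RepeatedBasisCode

variable {ι R : Type*} {z : ι → ℕ}

def left (r : Σ i, Fin (z i - 1)) : Σ i, Fin (z i) := ⟨r.1, ⟨r.2, by omega⟩⟩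

def right (r : Σ i, Fin (z i - 1)) : Σ i, Fin (z i) := ⟨r.1, ⟨r.2 + 1, by omega⟩⟩

theorem left_ne_right (r : Σ i, Fin (z i - 1)) : left r ≠ right r := by
  simp [left, right]

variable [DecidableEq ι]

section

variable (R z)

def generator [Zero R] [One R] : Matrix ι (Σ i, Fin (z i)) R :=
  fun j c => if c.1 = j then 1 else 0

def parityCheck [Zero R] [One R] : Matrix (Σ i, Fin (z i - 1)) (Σ i, Fin (z i)) R :=
  fun r c => if c.1 = r.1 ∧ (c.2.1 = r.2.1 ∨ c.2.1 = r.2.1 + 1) then 1 else 0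

def parityCheckRightInv [Zero R] [One R] : Matrix (Σ i, Fin (z i)) (Σ i, Fin (z i - 1)) R :=
  fun c s => if c.1 = s.1 ∧ c.2.1 ≤ s.2.1 then 1 else 0

end

theorem parityCheck_apply [Zero R] [One R] (r : Σ i, Fin (z i - 1)) (c : Σ i, Fin (z i)) :
    parityCheck R z r c = if c = left r ∨ c = right r then 1 else 0 := by
  simp only [parityCheck, Sigma.fin_ext_iff, left, right, ← and_or_left]

theorem parityCheck_eq_one_iff (r : Σ i, Fin (z i - 1)) (c : Σ i, Fin (z i)) :
    parityCheck (ZMod 2) z r c = 1 ↔ c = left r ∨ c = right r := by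
  rw [parityCheck_apply]
  split_ifs with h <;> simp [h]

variable [Fintype ι]

theorem parityCheck_mul_apply [NonAssocSemiring R] {o : Type*} (M : Matrix (Σ i, Fin (z i)) o R)
    (r : Σ i, Fin (z i - 1)) (j : o) :
    (parityCheck R z * M) r j = M (left r) j + M (right r) j := by
  have hsplit : ∀ c, parityCheck R z r c =
      (if c = left r then 1 else 0) + (if c = right r then 1 else 0) := by
    intro c
    rw [parityCheck_apply]
    by_cases hl : c = left r
    · simp [hl, left_ne_right]
    · simp [hl]
  simp [Matrix.mul_apply, hsplit, add_mul, Finset.sum_add_distrib]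

theorem parityCheck_mul_generator_transpose [Ring R] [CharP R 2] :
    parityCheck R z * (generator R z).transpose = 0 := by
  ext r j
  rw [parityCheck_mul_apply]
  exact CharTwo.add_self_eq_zero _

theorem parityCheck_mul_parityCheckRightInv [Ring R] [CharP R 2] :
    parityCheck R z * parityCheckRightInv R z = 1 := by
  ext r s
  rw [parityCheck_mul_apply, Matrix.one_apply]
  simp only [parityCheckRightInv, left, right, Sigma.fin_ext_iff]
  by_cases hrs : r.1 = s.1
  · simp only [hrs, true_and]
    rcases lt_trichotomy (r.2 : ℕ) s.2 with h | h | h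
    · rw [if_pos (by omega), if_pos (by omega), if_neg (by omega), CharTwo.add_self_eq_zero]
    · rw [if_pos (by omega), if_neg (by omega), if_pos h, add_zero]
    · rw [if_neg (by omega), if_neg (by omega), if_neg (by omega), add_zero]
  · simp [hrs]

theorem rank_parityCheck [Field R] [CharP R 2] (hz : ∀ i, 1 ≤ z i) :
    (parityCheck R z).rank = ∑ i, z i - Fintype.card ι := by
  rw [Matrix.rank_eq_card_height_of_mul_eq_one (parityCheck_mul_parityCheckRightInv (R := R)),
    Fintype.card_sigma]
  simp only [Fintype.card_fin]
  rw [Finset.sum_tsub_distrib _ fun i _ => hz i, Finset.sum_const, smul_eq_mul, mul_one,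
    Finset.card_univ]

theorem vecMul_generator [NonAssocSemiring R] (u : ι → R) (c : Σ i, Fin (z i)) :
    Matrix.vecMul u (generator R z) c = u c.1 := by
  simp [Matrix.vecMul, dotProduct, generator]

theorem hammingWt_vecMul_generator (u : ι → ZMod 2) :
    hammingWt (Matrix.vecMul u (generator (ZMod 2) z)) =
      ∑ i ∈ Finset.univ.filter (u · ≠ 0), z i := by
  simp only [hammingWt, vecMul_generator]
  exact (Finset.card_filter_sigma_fst (α := fun i => Fin (z i)) (u · ≠ 0)).trans
    (by simp only [Fintype.card_fin])

theorem le_hammingWt_vecMul_generator {d : ℕ} (hd : ∀ i, d ≤ z i) {u : ι → ZMod 2}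
    (hu : u ≠ 0) : d ≤ hammingWt (Matrix.vecMul u (generator (ZMod 2) z)) := by
  obtain ⟨i, hi⟩ := Function.ne_iff.mp hu
  rw [hammingWt_vecMul_generator]
  exact (hd i).trans (Finset.single_le_sum (fun _ _ => Nat.zero_le _) (by simpa using hi))

theorem hammingWt_vecMul_generator_single (i : ι) :
    hammingWt (Matrix.vecMul (Pi.single i 1) (generator (ZMod 2) z)) = z i := by
  rw [hammingWt_vecMul_generator]
  simp [Pi.single_apply, Finset.filter_eq']

section FundamentalCone

variable {x : (Σ i, Fin (z i)) → ℝ}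

theorem apply_eq_of_mem_fundCone (hx : x ∈ fundCone (parityCheck (ZMod 2) z))
    {c d : Σ i, Fin (z i)} (hcd : c.1 = d.1) : x c = x d := by
  have hstep : ∀ r, x (left r) = x (right r) := fun r =>
    eq_of_mem_fundCone_of_row_support_eq_pair hx (left_ne_right r) (parityCheck_eq_one_iff r)
  have hzero : ∀ i (m : ℕ) (hm : m < z i), x ⟨i, ⟨m, hm⟩⟩ = x ⟨i, ⟨0, by omega⟩⟩ := by
    intro i m
    induction m with
    | zero => exact fun _ => rfl
    | succ m ih => exact fun hm => (hstep ⟨i, ⟨m, by omega⟩⟩).symm.trans (ih (by omega))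
  obtain ⟨i, s⟩ := c
  obtain ⟨j, t⟩ := d
  obtain rfl : i = j := hcd
  exact (hzero i s s.2).trans (hzero i t t.2).symm

theorem mul_le_sum_of_mem_fundCone (hx : x ∈ fundCone (parityCheck (ZMod 2) z))
    (c : Σ i, Fin (z i)) : (z c.1 : ℝ) * x c ≤ ∑ d, x d :=
  calc (z c.1 : ℝ) * x c = ∑ t : Fin (z c.1), x ⟨c.1, t⟩ := by
        rw [Finset.sum_congr rfl fun t _ => apply_eq_of_mem_fundCone hx (c := ⟨c.1, t⟩) (d := c) rfl,
          Finset.sum_const, Finset.card_univ, Fintype.card_fin, nsmul_eq_mul]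
    _ ≤ ∑ i, ∑ t : Fin (z i), x ⟨i, t⟩ :=
        Finset.single_le_sum (f := fun i => ∑ t : Fin (z i), x ⟨i, t⟩)
          (fun _ _ => Finset.sum_nonneg fun _ _ => hx.1 _) (Finset.mem_univ c.1)
    _ = ∑ d, x d := (Fintype.sum_sigma _).symm

theorem le_wMaxfrac_of_mem_fundCone {d : ℕ} (hd : ∀ i, d ≤ z i)
    (hx : x ∈ fundCone (parityCheck (ZMod 2) z)) (hx0 : x ≠ 0) : (d : ℝ) ≤ wMaxfrac x :=
  le_wMaxfrac_of_forall_mul_le hx.1 hx0 fun c =>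
    (mul_le_mul_of_nonneg_right (by exact_mod_cast hd c.1) (hx.1 c)).trans
      (mul_le_sum_of_mem_fundCone hx c)

end FundamentalCone

end RepeatedBasisCode

open RepeatedBasisCode

/-- The code whose generator matrix has as columns each standard basis vector e_i
    of GF(2)^k repeated z_i times, with the natural block-diagonal chain
    parity-check matrix H: H is a parity-check matrix (H Gᵀ = 0, rank n - k),
    the minimum distance is min_i z_i, and every nonzero pseudocodeword has
    max-fractional weight at least min_i z_i. -/
theorem repeated_basis_code_pseudoweight {k : ℕ} (hk : 0 < k)
    (z : Fin k → ℕ) (hz : ∀ i, 1 ≤ z i) :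
    let G : Matrix (Fin k) (Σ i : Fin k, Fin (z i)) (ZMod 2) :=
      fun j c => if c.1 = j then 1 else 0
    let H : Matrix (Σ i : Fin k, Fin (z i - 1)) (Σ i : Fin k, Fin (z i)) (ZMod 2) :=
      fun r c => if c.1 = r.1 ∧ (c.2.1 = r.2.1 ∨ c.2.1 = r.2.1 + 1) then 1 else 0
    let dmin : ℕ := Finset.univ.inf' ⟨⟨0, hk⟩, Finset.mem_univ _⟩ z
    (H * G.transpose = 0) ∧
    (H.rank = (∑ i, z i) - k) ∧
    (∀ u : Fin k → ZMod 2, u ≠ 0 → dmin ≤ hammingWt (Matrix.vecMul u G)) ∧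
    (∃ u : Fin k → ZMod 2, u ≠ 0 ∧ hammingWt (Matrix.vecMul u G) = dmin) ∧
    (∀ x ∈ fundCone H, x ≠ 0 → (dmin : ℝ) ≤ wMaxfrac x) := by
  intro G H dmin
  have hdmin : ∀ i, dmin ≤ z i := fun i => Finset.inf'_le z (Finset.mem_univ i)
  obtain ⟨i₀, -, hi₀⟩ := Finset.exists_mem_eq_inf' ⟨⟨0, hk⟩, Finset.mem_univ _⟩ z
  have hrank : H.rank = ∑ i, z i - k := (rank_parityCheck hz).trans (by rw [Fintype.card_fin])
  exact ⟨parityCheck_mul_generator_transpose, hrank,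
    fun _ hu => le_hammingWt_vecMul_generator hdmin hu,
    ⟨Pi.single i₀ 1, by simp, (hammingWt_vecMul_generator_single i₀).trans hi₀.symm⟩,
    fun _ hx hx0 => le_wMaxfrac_of_mem_fundCone hdmin hx hx0⟩
end

section
/- Let H be an m×n binary parity-check matrix whose first m−1 rows each have weight 2, let ~ be the equivalence relation on columns generated by these weight-2 rows, and suppose the support I_m of the last row intersects each equivalence class in at most one element. Then for every nonzero x in the fundamental cone K(H), the max-fractional weight w_maxfrac(x) is at least the minimum Hamming distance of the code with parity-check matrix H. -/
open Finset Matrix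

variable {ι κ : Type*}

def rowSupport [Fintype κ] (H : Matrix ι κ (ZMod 2)) (j : ι) : Finset κ := {i | H j i = 1}

-- With `P` selecting the weight-two rows, `Relation.EqvGen (pairRel H P)` is the relation `~`.
def pairRel (H : Matrix ι κ (ZMod 2)) (P : ι → Prop) (a b : κ) : Prop :=
  ∃ j, P j ∧ {k | H j k = 1} = ({a, b} : Set κ)

open Classical in
noncomputable def eqvClass [Fintype κ] (r : κ → κ → Prop) (a : κ) : Finset κ :=
  {b | Relation.EqvGen r a b}

lemma indicator_one_ne_zero_of_mem {M : Type*} [Zero M] [One M] [NeZero (1 : M)] {s : Set κ}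
    {a : κ} (ha : a ∈ s) : s.indicator (1 : κ → M) ≠ 0 :=
  fun h => by simpa [ha] using congrFun h a

section ParityCheck

variable [Fintype κ] {H : Matrix ι κ (ZMod 2)}

lemma mem_rowSupport {j : ι} {i : κ} : i ∈ rowSupport H j ↔ H j i = 1 := by
  simp [rowSupport]

variable [DecidableEq κ]

lemma pairRel_iff {P : ι → Prop} {a b : κ} :
    pairRel H P a b ↔ ∃ j, P j ∧ rowSupport H j = {a, b} := by
  have hcoe (j : ι) : (rowSupport H j : Set κ) = {k | H j k = 1} := by
    ext; simp [rowSupport]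
  simp only [pairRel, ← hcoe, ← coe_pair, coe_inj]

lemma mulVec_indicator_apply (S : Finset κ) (j : ι) :
    (H *ᵥ (S : Set κ).indicator 1) j = (#(rowSupport H j ∩ S) : ZMod 2) := by
  rw [card_eq_sum_ones, Nat.cast_sum, ← univ_inter (_ ∩ S), ← sum_ite_mem, Matrix.mulVec,
    dotProduct]
  refine sum_congr rfl fun i _ => ?_
  have : ∀ a : ZMod 2, a = 0 ∨ a = 1 := by decide
  rcases this (H j i) with h | h <;> by_cases hi : i ∈ S <;> simp [rowSupport, h, hi]

lemma hammingWt_indicator (S : Finset κ) :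
    hammingWt ((S : Set κ).indicator (1 : κ → ZMod 2)) = #S := by
  simp [hammingWt, Set.indicator_apply]

lemma even_card_rowSupport_inter {P : ι → Prop} {S : Finset κ}
    (hS : ∀ a b, pairRel H P a b → (a ∈ S ↔ b ∈ S)) {j : ι} (hj : P j)
    (h2 : #(rowSupport H j) = 2) : Even #(rowSupport H j ∩ S) := by
  obtain ⟨a, b, hab, hsupp⟩ := card_eq_two.mp h2
  have hiff := hS a b (pairRel_iff.2 ⟨j, hj, hsupp⟩)
  rw [hsupp]
  by_cases ha : a ∈ S
  · rw [insert_inter_of_mem ha, singleton_inter_of_mem (hiff.1 ha), card_pair hab]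
    exact even_two
  · rw [insert_inter_of_notMem ha, singleton_inter_of_notMem (mt hiff.2 ha), card_empty]
    exact Even.zero

lemma mulVec_indicator_eq_zero {P : ι → Prop} {j₀ : ι}
    (h2 : ∀ j, P j → #(rowSupport H j) = 2) (hP : ∀ j, ¬ P j → j = j₀)
    {S : Finset κ} (hS : ∀ a b, pairRel H P a b → (a ∈ S ↔ b ∈ S))
    (heven : Even #(rowSupport H j₀ ∩ S)) : H *ᵥ (S : Set κ).indicator 1 = 0 := by
  funext j
  rw [mulVec_indicator_apply, Pi.zero_apply, ZMod.natCast_eq_zero_iff_even]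
  by_cases hj : P j
  · exact even_card_rowSupport_inter hS hj (h2 j hj)
  · exact hP j hj ▸ heven

end ParityCheck

section Classes

variable [Fintype κ] {r : κ → κ → Prop}

lemma mem_eqvClass {a b : κ} : b ∈ eqvClass r a ↔ Relation.EqvGen r a b := by
  simp [eqvClass]

lemma self_mem_eqvClass (a : κ) : a ∈ eqvClass r a :=
  mem_eqvClass.2 (.refl a)

lemma mem_eqvClass_iff_of_rel {a b c : κ} (h : r b c) :
    b ∈ eqvClass r a ↔ c ∈ eqvClass r a := by
  simp only [mem_eqvClass]
  exact ⟨fun hab => .trans _ _ _ hab (.rel _ _ h),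
    fun hac => .trans _ _ _ hac (.symm _ _ (.rel _ _ h))⟩

end Classes

lemma exists_mem_mul_sum_le_sum_mul {α R : Type*} [CommSemiring R] [LinearOrder R]
    [IsStrictOrderedRing R] {T : Finset α} {x w : α → R} (hx : ∀ i ∈ T, 0 ≤ x i)
    (hpos : 0 < ∑ i ∈ T, x i) : ∃ ℓ ∈ T, w ℓ * ∑ i ∈ T, x i ≤ ∑ i ∈ T, w i * x i := by
  obtain ⟨k, hk⟩ : (T.filter (0 < x ·)).Nonempty := by
    obtain ⟨k, hkT, hk⟩ := (sum_pos_iff_of_nonneg hx).1 hpos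
    exact ⟨k, mem_filter.2 ⟨hkT, hk⟩⟩
  obtain ⟨ℓ, hℓ, hmin⟩ := exists_min_image _ w ⟨k, hk⟩
  refine ⟨ℓ, (mem_filter.1 hℓ).1, ?_⟩
  rw [mul_sum]
  refine sum_le_sum fun i hi => ?_
  rcases (hx i hi).eq_or_lt with h | h
  · simp [← h]
  · exact mul_le_mul_of_nonneg_right (hmin i (mem_filter.2 ⟨hi, h⟩)) h.le

section Cone

variable [Fintype ι] [Fintype κ] [DecidableEq κ] {H : Matrix ι κ (ZMod 2)} {P : ι → Prop}
  {x : κ → ℝ}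

lemma le_sum_erase_of_mem_fundCone (hx : x ∈ fundCone H) {j : ι} {ℓ : κ}
    (hℓ : ℓ ∈ rowSupport H j) : x ℓ ≤ ∑ i ∈ (rowSupport H j).erase ℓ, x i := by
  convert hx.2 j ℓ (mem_rowSupport.1 hℓ) using 2
  ext i
  simp [rowSupport, and_comm]

lemma eq_of_pairRel_of_mem_fundCone (hx : x ∈ fundCone H) {a b : κ} (hab : pairRel H P a b) :
    x a = x b := by
  obtain ⟨j, -, hj⟩ := pairRel_iff.1 hab
  have key : ∀ u v, rowSupport H j = {u, v} → u ≠ v → x u ≤ x v := fun u v h huv => by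
    have := le_sum_erase_of_mem_fundCone hx (h ▸ mem_insert_self u {v})
    rwa [h, erase_insert (notMem_singleton.2 huv), sum_singleton] at this
  rcases eq_or_ne a b with rfl | hne
  · rfl
  · exact le_antisymm (key a b hj hne) (key b a (hj.trans (pair_comm a b)) hne.symm)

lemma eq_of_eqvGen_of_mem_fundCone (hx : x ∈ fundCone H) {a b : κ}
    (hab : Relation.EqvGen (pairRel H P) a b) : x a = x b := by
  induction hab with
  | rel a b h => exact eq_of_pairRel_of_mem_fundCone hx h
  | refl a => rfl
  | symm a b _ ih => exact ih.symm
  | trans a b c _ _ ih₁ ih₂ => exact ih₁.trans ih₂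

lemma sum_eqvClass_of_mem_fundCone (hx : x ∈ fundCone H) (a : κ) :
    ∑ i ∈ eqvClass (pairRel H P) a, x i = #(eqvClass (pairRel H P) a) * x a := by
  rw [sum_congr rfl fun i hi => (eq_of_eqvGen_of_mem_fundCone hx (mem_eqvClass.1 hi)).symm,
    sum_const, nsmul_eq_mul]

end Cone

section WeightTwoPlusOneRow

variable [Fintype κ] {H : Matrix ι κ (ZMod 2)} {P : ι → Prop} {j₀ : ι}
  (hlast : ∀ i i', H j₀ i = 1 → H j₀ i' = 1 → Relation.EqvGen (pairRel H P) i i' → i = i')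
include hlast

lemma disjoint_eqvClass {u v : κ} (hu : u ∈ rowSupport H j₀) (hv : v ∈ rowSupport H j₀)
    (huv : u ≠ v) : Disjoint (eqvClass (pairRel H P) u) (eqvClass (pairRel H P) v) := by
  refine disjoint_left.2 fun i hiu hiv => huv ?_
  exact hlast u v (mem_rowSupport.1 hu) (mem_rowSupport.1 hv)
    (.trans _ _ _ (mem_eqvClass.1 hiu) (.symm _ _ (mem_eqvClass.1 hiv)))

variable [DecidableEq κ]

lemma rowSupport_inter_eqvClass {ℓ : κ} (hℓ : ℓ ∈ rowSupport H j₀) :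
    rowSupport H j₀ ∩ eqvClass (pairRel H P) ℓ = {ℓ} := by
  ext i
  simp only [mem_inter, mem_singleton]
  constructor
  · rintro ⟨hi, hiℓ⟩
    exact (hlast ℓ i (mem_rowSupport.1 hℓ) (mem_rowSupport.1 hi) (mem_eqvClass.1 hiℓ)).symm
  · rintro rfl
    exact ⟨hℓ, self_mem_eqvClass i⟩

variable [Fintype ι] {x : κ → ℝ} (h2 : ∀ j, P j → #(rowSupport H j) = 2)
  (hP : ∀ j, ¬ P j → j = j₀)

lemma sum_card_eqvClass_mul_le_sum (hx : x ∈ fundCone H) :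
    ∑ ℓ ∈ rowSupport H j₀, #(eqvClass (pairRel H P) ℓ) * x ℓ ≤ ∑ i, x i := by
  have hpair : (rowSupport H j₀ : Set κ).PairwiseDisjoint (eqvClass (pairRel H P)) :=
    fun u hu v hv huv => disjoint_eqvClass hlast hu hv huv
  calc ∑ ℓ ∈ rowSupport H j₀, #(eqvClass (pairRel H P) ℓ) * x ℓ
      = ∑ i ∈ (rowSupport H j₀).biUnion (eqvClass (pairRel H P)), x i := by
        rw [sum_biUnion hpair]
        exact sum_congr rfl fun ℓ _ => (sum_eqvClass_of_mem_fundCone hx ℓ).symm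
    _ ≤ ∑ i, x i := sum_le_sum_of_subset_of_nonneg (subset_univ _) fun i _ _ => hx.1 i

omit hlast in
include h2 hP in
lemma exists_codeword_of_disjoint (hx : x ∈ fundCone H) {i : κ}
    (hi : Disjoint (rowSupport H j₀) (eqvClass (pairRel H P) i)) :
    ∃ c, H *ᵥ c = 0 ∧ c ≠ 0 ∧ (hammingWt c : ℝ) * x i ≤ ∑ k, x k := by
  refine ⟨_, mulVec_indicator_eq_zero h2 hP (fun _ _ => mem_eqvClass_iff_of_rel) ?_,
    indicator_one_ne_zero_of_mem (self_mem_eqvClass i), ?_⟩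
  · rw [disjoint_iff_inter_eq_empty.1 hi, card_empty]
    exact Even.zero
  · rw [hammingWt_indicator, ← sum_eqvClass_of_mem_fundCone hx]
    exact sum_le_sum_of_subset_of_nonneg (subset_univ _) fun k _ _ => hx.1 k

include h2 hP in
lemma exists_codeword_of_mem_rowSupport (hx : x ∈ fundCone H) {ℓ₀ : κ}
    (hℓ₀ : ℓ₀ ∈ rowSupport H j₀) (hpos : 0 < x ℓ₀) :
    ∃ c, H *ᵥ c = 0 ∧ c ≠ 0 ∧ (hammingWt c : ℝ) * x ℓ₀ ≤ ∑ k, x k := by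
  set B := rowSupport H j₀
  set C := eqvClass (pairRel H P)
  have hcone := le_sum_erase_of_mem_fundCone hx hℓ₀
  obtain ⟨ℓ₁, hℓ₁, hmin⟩ := exists_mem_mul_sum_le_sum_mul (w := fun ℓ => (#(C ℓ) : ℝ))
    (fun i _ => hx.1 i) (hpos.trans_le hcone)
  have hne : ℓ₁ ≠ ℓ₀ := ne_of_mem_erase hℓ₁
  have hℓ₁B : ℓ₁ ∈ B := mem_of_mem_erase hℓ₁
  refine ⟨(↑(C ℓ₀ ∪ C ℓ₁) : Set κ).indicator 1, mulVec_indicator_eq_zero h2 hP ?_ ?_,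
    indicator_one_ne_zero_of_mem (mem_union_left _ (self_mem_eqvClass ℓ₀)), ?_⟩
  · intro a b hab
    simp only [mem_union]
    exact or_congr (mem_eqvClass_iff_of_rel hab) (mem_eqvClass_iff_of_rel hab)
  · rw [inter_union_distrib_left, rowSupport_inter_eqvClass hlast hℓ₀,
      rowSupport_inter_eqvClass hlast hℓ₁B, ← insert_eq, card_pair hne.symm]
    exact even_two
  · rw [hammingWt_indicator, card_union_of_disjoint (disjoint_eqvClass hlast hℓ₀ hℓ₁B hne.symm),
      Nat.cast_add]
    calc ((#(C ℓ₀) : ℝ) + #(C ℓ₁)) * x ℓ₀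
        ≤ #(C ℓ₀) * x ℓ₀ + #(C ℓ₁) * ∑ i ∈ B.erase ℓ₀, x i := by
          rw [add_mul]; gcongr
      _ ≤ #(C ℓ₀) * x ℓ₀ + ∑ ℓ ∈ B.erase ℓ₀, #(C ℓ) * x ℓ := by gcongr
      _ = ∑ ℓ ∈ B, #(C ℓ) * x ℓ := add_sum_erase _ (fun ℓ => (#(C ℓ) : ℝ) * x ℓ) hℓ₀
      _ ≤ ∑ k, x k := sum_card_eqvClass_mul_le_sum hlast hx

include h2 hP in
theorem exists_codeword_hammingWt_mul_le_sum (hx : x ∈ fundCone H) {i : κ} (hpos : 0 < x i) :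
    ∃ c, H *ᵥ c = 0 ∧ c ≠ 0 ∧ (hammingWt c : ℝ) * x i ≤ ∑ k, x k := by
  by_cases hi : Disjoint (rowSupport H j₀) (eqvClass (pairRel H P) i)
  · exact exists_codeword_of_disjoint h2 hP hx hi
  · obtain ⟨ℓ, hℓ, hℓi⟩ := not_disjoint_iff.1 hi
    rw [eq_of_eqvGen_of_mem_fundCone hx (mem_eqvClass.1 hℓi)] at hpos ⊢
    exact exists_codeword_of_mem_rowSupport hlast h2 hP hx hℓ hpos

end WeightTwoPlusOneRow

theorem pseudoweight_weight_two_plus_one_row_general {m n : ℕ} (hm : 0 < m) (d : ℕ)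
    (H : Matrix (Fin m) (Fin n) (ZMod 2))
    (h2 : ∀ j : Fin m, (j : ℕ) < m - 1 →
      (Finset.univ.filter (fun i => H j i = 1)).card = 2)
    (hlast : ∀ i i' : Fin n,
      H ⟨m - 1, Nat.sub_lt hm one_pos⟩ i = 1 →
      H ⟨m - 1, Nat.sub_lt hm one_pos⟩ i' = 1 →
      Relation.EqvGen (fun a b => ∃ j : Fin m, (j : ℕ) < m - 1 ∧
        {k | H j k = 1} = ({a, b} : Set (Fin n))) i i' →
      i = i')
    (hd_min : ∀ c : Fin n → ZMod 2, H.mulVec c = 0 → c ≠ 0 → d ≤ hammingWt c) :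
    ∀ x ∈ fundCone H, x ≠ 0 → (d : ℝ) ≤ wMaxfrac x := by
  intro x hx hx0
  obtain ⟨i, hi⟩ := Function.ne_iff.1 hx0
  have : Nonempty (Fin n) := ⟨i⟩
  obtain ⟨i₀, hi₀⟩ := exists_eq_ciSup_of_finite (f := x)
  have hpos : 0 < x i₀ :=
    ((hx.1 i).lt_of_ne' hi).trans_le (hi₀ ▸ le_ciSup (Set.finite_range x).bddAbove i)
  have hP (j : Fin m) (hj : ¬ (j : ℕ) < m - 1) : j = ⟨m - 1, Nat.sub_lt hm one_pos⟩ := by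
    have := j.isLt
    ext
    simp only
    omega
  obtain ⟨c, hc, hc0, hwt⟩ := exists_codeword_hammingWt_mul_le_sum hlast h2 hP hx hpos
  rw [wMaxfrac, ← hi₀, le_div_iff₀ hpos]
  exact le_trans (by gcongr; exact_mod_cast hd_min c hc hc0) hwt

/-- If the first m-1 rows of H have weight 2 and the support of the last row meets
    each equivalence class (of the relation generated by the weight-2 rows) in at
    most one element, then every nonzero pseudocodeword has max-fractional weight
    at least the minimum distance of the code. -/
theorem pseudoweight_weight_two_plus_one_row {m n : ℕ} (hm : 0 < m) (d : ℕ)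
    (H : Matrix (Fin m) (Fin n) (ZMod 2))
    (h2 : ∀ j : Fin m, (j : ℕ) < m - 1 →
      (Finset.univ.filter (fun i => H j i = 1)).card = 2)
    (hlast : ∀ i i' : Fin n,
      H ⟨m - 1, Nat.sub_lt hm one_pos⟩ i = 1 →
      H ⟨m - 1, Nat.sub_lt hm one_pos⟩ i' = 1 →
      Relation.EqvGen (fun a b => ∃ j : Fin m, (j : ℕ) < m - 1 ∧
        {k | H j k = 1} = ({a, b} : Set (Fin n))) i i' →
      i = i')
    (hd_min : ∀ c : Fin n → ZMod 2, H.mulVec c = 0 → c ≠ 0 → d ≤ hammingWt c)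
    (hd_ex : ∃ c : Fin n → ZMod 2, H.mulVec c = 0 ∧ c ≠ 0 ∧ hammingWt c = d) :
    ∀ x ∈ fundCone H, x ≠ 0 → (d : ℝ) ≤ wMaxfrac x :=
  pseudoweight_weight_two_plus_one_row_general hm d H h2 hlast hd_min
end
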